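/- arXiv:2303.18208 — 3 statements merged into one kernel-verified Lean document; each statement's English description precedes it below -/
import Mathlib

section
/- Let n ≥ 6 and let A be an algebraic curvature tensor on ℝⁿ with δ ≤ R̄ ≤ Δ. Let e₁, …, e₆ ∈ ℝⁿ be pairwise orthonormal vectors and b₁, b₂, b₃ ∈ ℝ, not all zero, with b₁ + b₂ + b₃ = 0, and let β be the skew-symmetric array β_{kl} = ∑_{i=1}^{3} bᵢ ((eᵢ)_k (e_{i+3})_l − (eᵢ)_l (e_{i+3})_k). If μ ∈ ℝ satisfies ∑_{k,l} A_{ijkl} β_{kl} = μ β_{ij} for all i, j, then |μ + (Δ+δ)| ≤ (7/3)(Δ − δ). -/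
/-!
Contract the eigenvalue equation `R̂ β = μ β` with `e_k ∧ e_{k+3}`, where `|b_k|` is
maximal: by orthonormality this gives `μ b_k = 2 ∑ₘ bₘ R(e_k, e_{k+3}, e_m, e_{m+3})`.
The diagonal term is minus a sectional curvature, so it lies in `[-Δ, -δ]`; the two
off-diagonal terms are curvatures of orthonormal quadruples, bounded by `2/3 (Δ - δ)`
(Berger's estimate, from polarization and the Bianchi identity). Since `∑ bᵢ = 0` has
three entries, the other two `|bₘ|` sum to at most `|b_k|`, so
`|μ + Δ + δ| ≤ (Δ - δ) + 2 · 2/3 (Δ - δ)`.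
-/

open scoped BigOperators InnerProductSpace

variable {n : ℕ}

/-- `R(X, Y, Z, W)`, in the sign convention where `R(X, Y, Y, X)` is the sectional curvature
of an orthonormal pair. -/
def curvatureForm (A : Fin n → Fin n → Fin n → Fin n → ℝ)
    (X Y Z W : EuclideanSpace ℝ (Fin n)) : ℝ :=
  ∑ i, ∑ j, ∑ p, ∑ q, A i j p q * X i * Y j * Z p * W q

structure IsAlgebraicCurvatureTensor (A : Fin n → Fin n → Fin n → Fin n → ℝ) : Prop where
  antisymm_left : ∀ i j p q, A i j p q = -A j i p q
  antisymm_right : ∀ i j p q, A i j p q = -A i j q p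
  swap_pairs : ∀ i j p q, A i j p q = A p q i j
  bianchi : ∀ i j p q, A i j p q + A p i j q + A j p i q = 0

def SectionalCurvatureBetween (A : Fin n → Fin n → Fin n → Fin n → ℝ) (δ Δ : ℝ) : Prop :=
  ∀ X Y : EuclideanSpace ℝ (Fin n), ‖X‖ ^ 2 * ‖Y‖ ^ 2 - ⟪X, Y⟫_ℝ ^ 2 = 1 →
    δ ≤ curvatureForm A X Y Y X ∧ curvatureForm A X Y Y X ≤ Δ

theorem Finset.sum_comm_pairs {ι M : Type*} [Fintype ι] [AddCommMonoid M]
    (f : ι → ι → ι → ι → M) :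
    ∑ i, ∑ j, ∑ p, ∑ q, f i j p q = ∑ i, ∑ j, ∑ p, ∑ q, f p q i j := by
  rw [Finset.sum_comm_cycle]
  exact Finset.sum_congr rfl fun _ _ => Finset.sum_comm_cycle

section CurvatureForm

variable {A : Fin n → Fin n → Fin n → Fin n → ℝ} (X Y Z W : EuclideanSpace ℝ (Fin n))

theorem curvatureForm_smul_middle (t : ℝ) :
    curvatureForm A X (t • Y) (t • Y) X = t ^ 2 * curvatureForm A X Y Y X := by
  simp only [curvatureForm, PiLp.smul_apply, smul_eq_mul, Finset.mul_sum]
  congr! 4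
  ring

theorem curvatureForm_polarization_middle :
    curvatureForm A X (Y + Z) (Y + Z) X - curvatureForm A X (Y - Z) (Y - Z) X
      = 2 * (curvatureForm A X Y Z X + curvatureForm A X Z Y X) := by
  simp only [curvatureForm, PiLp.add_apply, PiLp.sub_apply, ← Finset.sum_sub_distrib,
    ← Finset.sum_add_distrib, Finset.mul_sum]
  congr! 4
  ring

theorem curvatureForm_polarization_outer :
    curvatureForm A (X + W) Y Z (X + W) - curvatureForm A (X - W) Y Z (X - W)
      = 2 * (curvatureForm A X Y Z W + curvatureForm A W Y Z X) := by
  simp only [curvatureForm, PiLp.add_apply, PiLp.sub_apply, ← Finset.sum_sub_distrib,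
    ← Finset.sum_add_distrib, Finset.mul_sum]
  congr! 4
  ring

end CurvatureForm

namespace IsAlgebraicCurvatureTensor

variable {A : Fin n → Fin n → Fin n → Fin n → ℝ} (X Y Z W : EuclideanSpace ℝ (Fin n))

theorem curvatureForm_swap_left (hA : IsAlgebraicCurvatureTensor A) :
    curvatureForm A Y X Z W = -curvatureForm A X Y Z W := by
  rw [curvatureForm, curvatureForm, Finset.sum_comm]
  simp only [← Finset.sum_neg_distrib]
  congr! 4
  rw [hA.antisymm_left]
  ring

theorem curvatureForm_swap_right (hA : IsAlgebraicCurvatureTensor A) :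
    curvatureForm A X Y W Z = -curvatureForm A X Y Z W := by
  simp only [curvatureForm, ← Finset.sum_neg_distrib]
  congr! 2
  rw [Finset.sum_comm]
  congr! 2
  rw [hA.antisymm_right]
  ring

theorem curvatureForm_swap_pairs (hA : IsAlgebraicCurvatureTensor A) :
    curvatureForm A Z W X Y = curvatureForm A X Y Z W := by
  simp only [curvatureForm]
  rw [Finset.sum_comm_pairs]
  congr! 4
  rw [hA.swap_pairs]
  ring

theorem curvatureForm_bianchi (hA : IsAlgebraicCurvatureTensor A) :
    curvatureForm A X Y Z W + curvatureForm A Z X Y W + curvatureForm A Y Z X W = 0 := by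
  have hZXY : curvatureForm A Z X Y W
      = ∑ i, ∑ j, ∑ p, ∑ q, A p i j q * X i * Y j * Z p * W q := by
    rw [curvatureForm, Finset.sum_comm_cycle, Finset.sum_comm_cycle]
    congr! 4
    ring
  have hYZX : curvatureForm A Y Z X W
      = ∑ i, ∑ j, ∑ p, ∑ q, A j p i q * X i * Y j * Z p * W q := by
    rw [curvatureForm, Finset.sum_comm_cycle]
    congr! 4
    ring
  rw [hZXY, hYZX, curvatureForm]
  simp only [← Finset.sum_add_distrib]
  refine Fintype.sum_eq_zero _ fun i => Fintype.sum_eq_zero _ fun j =>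
    Fintype.sum_eq_zero _ fun p => Fintype.sum_eq_zero _ fun q => ?_
  linear_combination X i * Y j * Z p * W q * hA.bianchi i j p q

theorem curvatureForm_comm_middle (hA : IsAlgebraicCurvatureTensor A) :
    curvatureForm A X Z Y X = curvatureForm A X Y Z X := by
  rw [hA.curvatureForm_swap_pairs Y X X Z, hA.curvatureForm_swap_left X Y X Z,
    hA.curvatureForm_swap_right X Y Z X, neg_neg]

end IsAlgebraicCurvatureTensor

namespace SectionalCurvatureBetween

variable {A : Fin n → Fin n → Fin n → Fin n → ℝ} {δ Δ : ℝ}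

theorem mul_gram_le (hsec : SectionalCurvatureBetween A δ Δ) {X Y : EuclideanSpace ℝ (Fin n)}
    (hXY : 0 < ‖X‖ ^ 2 * ‖Y‖ ^ 2 - ⟪X, Y⟫_ℝ ^ 2) :
    (‖X‖ ^ 2 * ‖Y‖ ^ 2 - ⟪X, Y⟫_ℝ ^ 2) * δ ≤ curvatureForm A X Y Y X ∧
      curvatureForm A X Y Y X ≤ (‖X‖ ^ 2 * ‖Y‖ ^ 2 - ⟪X, Y⟫_ℝ ^ 2) * Δ := by
  generalize hg : ‖X‖ ^ 2 * ‖Y‖ ^ 2 - ⟪X, Y⟫_ℝ ^ 2 = g at hXY ⊢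
  obtain ⟨t, ht⟩ : ∃ t : ℝ, t ^ 2 = g⁻¹ := ⟨(√g)⁻¹, by rw [inv_pow, Real.sq_sqrt hXY.le]⟩
  have hgram : ‖X‖ ^ 2 * ‖t • Y‖ ^ 2 - ⟪X, t • Y⟫_ℝ ^ 2 = 1 := by
    rw [norm_smul, real_inner_smul_right, Real.norm_eq_abs, mul_pow, mul_pow, sq_abs, ht]
    linear_combination g⁻¹ * hg + inv_mul_cancel₀ hXY.ne'
  obtain ⟨hlow, hup⟩ := hsec X (t • Y) hgram
  rw [curvatureForm_smul_middle, ht] at hlow hup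
  exact ⟨(le_inv_mul_iff₀ hXY).mp hlow, (inv_mul_le_iff₀ hXY).mp hup⟩

theorem le_neg_curvatureForm_of_orthonormal (hsec : SectionalCurvatureBetween A δ Δ)
    (hA : IsAlgebraicCurvatureTensor A) {X Y : EuclideanSpace ℝ (Fin n)} (hX : ‖X‖ = 1)
    (hY : ‖Y‖ = 1) (hXY : ⟪X, Y⟫_ℝ = 0) :
    δ ≤ -curvatureForm A X Y X Y ∧ -curvatureForm A X Y X Y ≤ Δ := by
  rw [← hA.curvatureForm_swap_right]
  exact hsec X Y (by rw [hX, hY, hXY]; norm_num)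

end SectionalCurvatureBetween

section Berger

variable {A : Fin n → Fin n → Fin n → Fin n → ℝ} {δ Δ : ℝ}

theorem abs_curvatureForm_mixed_le (hA : IsAlgebraicCurvatureTensor A)
    (hsec : SectionalCurvatureBetween A δ Δ) {U Y Z : EuclideanSpace ℝ (Fin n)} (hU : U ≠ 0)
    (hY : ‖Y‖ = 1) (hZ : ‖Z‖ = 1) (hUY : ⟪U, Y⟫_ℝ = 0) (hUZ : ⟪U, Z⟫_ℝ = 0)
    (hYZ : ⟪Y, Z⟫_ℝ = 0) :
    |curvatureForm A U Y Z U| ≤ (Δ - δ) / 2 * ‖U‖ ^ 2 := by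
  have hpos : 0 < 2 * ‖U‖ ^ 2 := by positivity
  have hgram_add : ‖U‖ ^ 2 * ‖Y + Z‖ ^ 2 - ⟪U, Y + Z⟫_ℝ ^ 2 = 2 * ‖U‖ ^ 2 := by
    rw [norm_add_sq_real, inner_add_right, hY, hZ, hYZ, hUY, hUZ]
    ring
  have hgram_sub : ‖U‖ ^ 2 * ‖Y - Z‖ ^ 2 - ⟪U, Y - Z⟫_ℝ ^ 2 = 2 * ‖U‖ ^ 2 := by
    rw [norm_sub_sq_real, inner_sub_right, hY, hZ, hYZ, hUY, hUZ]
    ring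
  have hadd := hsec.mul_gram_le (hgram_add ▸ hpos)
  have hsub := hsec.mul_gram_le (hgram_sub ▸ hpos)
  rw [hgram_add] at hadd
  rw [hgram_sub] at hsub
  have hpol := curvatureForm_polarization_middle (A := A) U Y Z
  rw [hA.curvatureForm_comm_middle U Y Z] at hpol
  rw [abs_le]
  constructor <;> linarith [hadd.1, hadd.2, hsub.1, hsub.2]

theorem abs_curvatureForm_sub_cycle_le (hA : IsAlgebraicCurvatureTensor A)
    (hsec : SectionalCurvatureBetween A δ Δ) {v : Fin 4 → EuclideanSpace ℝ (Fin n)}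
    (hv : Orthonormal ℝ v) :
    |curvatureForm A (v 0) (v 1) (v 2) (v 3) - curvatureForm A (v 0) (v 2) (v 3) (v 1)|
      ≤ Δ - δ := by
  have hbound : ∀ U, ‖U‖ ^ 2 = 2 → ⟪U, v 1⟫_ℝ = 0 → ⟪U, v 2⟫_ℝ = 0 →
      |curvatureForm A U (v 1) (v 2) U| ≤ Δ - δ := by
    intro U hU hU1 hU2
    have hU0 : U ≠ 0 := by
      rintro rfl
      norm_num at hU
    have := abs_curvatureForm_mixed_le hA hsec hU0 (hv.1 1) (hv.1 2) hU1 hU2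
      (hv.2 (by decide))
    rwa [hU, div_mul_cancel₀ _ two_ne_zero] at this
  have hadd := hbound (v 0 + v 3)
    (by rw [norm_add_sq_real, hv.1, hv.1, hv.2 (by decide)]; norm_num)
    (by rw [inner_add_left, hv.2 (by decide), hv.2 (by decide), add_zero])
    (by rw [inner_add_left, hv.2 (by decide), hv.2 (by decide), add_zero])
  have hsub := hbound (v 0 - v 3)
    (by rw [norm_sub_sq_real, hv.1, hv.1, hv.2 (by decide)]; norm_num)
    (by rw [inner_sub_left, hv.2 (by decide), hv.2 (by decide), sub_zero])
    (by rw [inner_sub_left, hv.2 (by decide), hv.2 (by decide), sub_zero])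
  have hpol := curvatureForm_polarization_outer (A := A) (v 0) (v 1) (v 2) (v 3)
  rw [hA.curvatureForm_swap_pairs (v 2) (v 0) (v 3) (v 1),
    hA.curvatureForm_swap_left (v 0) (v 2) (v 3) (v 1)] at hpol
  rw [abs_le] at hadd hsub ⊢
  constructor <;> linarith [hadd.1, hadd.2, hsub.1, hsub.2]

theorem abs_curvatureForm_le_of_orthonormal (hA : IsAlgebraicCurvatureTensor A)
    (hsec : SectionalCurvatureBetween A δ Δ) {v : Fin 4 → EuclideanSpace ℝ (Fin n)}
    (hv : Orthonormal ℝ v) :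
    |curvatureForm A (v 0) (v 1) (v 2) (v 3)| ≤ 2 / 3 * (Δ - δ) := by
  have hab := abs_curvatureForm_sub_cycle_le hA hsec hv
  have hbc := abs_curvatureForm_sub_cycle_le hA hsec (hv.comp ![0, 2, 3, 1] (by decide))
  have hca := abs_curvatureForm_sub_cycle_le hA hsec (hv.comp ![0, 3, 1, 2] (by decide))
  simp only [Function.comp_apply, Matrix.cons_val] at hbc hca
  have hsum := hA.curvatureForm_bianchi (v 2) (v 3) (v 0) (v 1)
  rw [hA.curvatureForm_swap_pairs (v 0) (v 1) (v 2) (v 3),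
    hA.curvatureForm_swap_left (v 0) (v 3) (v 2) (v 1),
    hA.curvatureForm_swap_right (v 0) (v 3) (v 1) (v 2), neg_neg] at hsum
  rw [abs_le] at hab hbc hca ⊢
  constructor <;> linarith [hab.1, hab.2, hbc.1, hbc.2, hca.1, hca.2]

end Berger

section TwoForm

variable {ι : Type*} [Fintype ι] (b : ι → ℝ) (x y : ι → EuclideanSpace ℝ (Fin n))

def twoForm (k l : Fin n) : ℝ :=
  ∑ m, b m * (x m k * y m l - x m l * y m k)

theorem sum_mul_twoForm (X Y : EuclideanSpace ℝ (Fin n)) :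
    ∑ k, ∑ l, X k * Y l * twoForm b x y k l
      = ∑ m, b m * (⟪X, x m⟫_ℝ * ⟪Y, y m⟫_ℝ - ⟪X, y m⟫_ℝ * ⟪Y, x m⟫_ℝ) := by
  simp only [twoForm, Finset.mul_sum]
  rw [Finset.sum_comm_cycle]
  congr! 1 with m
  simp only [PiLp.inner_apply, RCLike.inner_apply, conj_trivial]
  rw [Finset.sum_mul_sum, Finset.sum_mul_sum]
  simp only [← Finset.sum_sub_distrib, Finset.mul_sum]
  congr! 2
  ring

theorem sum_mul_curvature_twoForm {A : Fin n → Fin n → Fin n → Fin n → ℝ}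
    (hA : IsAlgebraicCurvatureTensor A) (X Y : EuclideanSpace ℝ (Fin n)) :
    ∑ k, ∑ l, X k * Y l * ∑ p, ∑ q, A k l p q * twoForm b x y p q
      = 2 * ∑ m, b m * curvatureForm A X Y (x m) (y m) := by
  calc _ = ∑ m, b m * (curvatureForm A X Y (x m) (y m) - curvatureForm A X Y (y m) (x m)) := by
        simp only [curvatureForm, twoForm, Finset.mul_sum, ← Finset.sum_sub_distrib]
        simp_rw [Finset.sum_comm (γ := Fin n) (α := ι)]
        congr! 5
        ring
    _ = _ := by
        rw [Finset.mul_sum]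
        congr! 1 with m
        rw [hA.curvatureForm_swap_right]
        ring

theorem mul_coeff_eq_of_eigen {A : Fin n → Fin n → Fin n → Fin n → ℝ}
    (hA : IsAlgebraicCurvatureTensor A) (hxy : Orthonormal ℝ (Sum.elim x y)) {μ : ℝ}
    (heig : ∀ i j, ∑ p, ∑ q, A i j p q * twoForm b x y p q = μ * twoForm b x y i j) (k : ι) :
    μ * b k = 2 * ∑ m, b m * curvatureForm A (x k) (y k) (x m) (y m) := by
  classical
  have hx : Orthonormal ℝ x := hxy.comp Sum.inl Sum.inl_injective
  have hy : Orthonormal ℝ y := hxy.comp Sum.inr Sum.inr_injective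
  have hxy₀ : ∀ i j, ⟪x i, y j⟫_ℝ = 0 := fun i j => hxy.inner_eq_zero Sum.inl_ne_inr
  have hyx₀ : ∀ i j, ⟪y i, x j⟫_ℝ = 0 := fun i j => hxy.inner_eq_zero Sum.inr_ne_inl
  have hpair :
      ∑ m, b m * (⟪x k, x m⟫_ℝ * ⟪y k, y m⟫_ℝ - ⟪x k, y m⟫_ℝ * ⟪y k, x m⟫_ℝ) = b k := by
    simp [orthonormal_iff_ite.mp hx, orthonormal_iff_ite.mp hy, hxy₀, hyx₀]
  calc μ * b k = μ * ∑ i, ∑ j, x k i * y k j * twoForm b x y i j := by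
        rw [sum_mul_twoForm, hpair]
    _ = ∑ i, ∑ j, x k i * y k j * ∑ p, ∑ q, A i j p q * twoForm b x y p q := by
        simp only [heig, Finset.mul_sum]
        congr! 2
        ring
    _ = _ := sum_mul_curvature_twoForm b x y hA _ _

end TwoForm

theorem abs_add_le_of_mul_eq_sum {ι : Type*} [Fintype ι] [DecidableEq ι] {μ δ Δ C : ℝ}
    {b R : ι → ℝ} {k : ι} (hC : 0 ≤ C) (hbk : b k ≠ 0)
    (hb : ∑ m ∈ Finset.univ.erase k, |b m| ≤ |b k|) (hδ : δ ≤ -R k) (hΔ : -R k ≤ Δ)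
    (hR : ∀ m ≠ k, |R m| ≤ C)
    (h : μ * b k = 2 * ∑ m, b m * R m) :
    |μ + (Δ + δ)| ≤ Δ - δ + 2 * C := by
  have hrest : |∑ m ∈ Finset.univ.erase k, b m * R m| ≤ |b k| * C :=
    calc |∑ m ∈ Finset.univ.erase k, b m * R m|
        ≤ ∑ m ∈ Finset.univ.erase k, |b m| * C := by
          refine (Finset.abs_sum_le_sum_abs _ _).trans (Finset.sum_le_sum fun m hm => ?_)
          rw [abs_mul]
          exact mul_le_mul_of_nonneg_left (hR m (Finset.ne_of_mem_erase hm)) (abs_nonneg _)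
      _ ≤ |b k| * C := by
          rw [← Finset.sum_mul]
          exact mul_le_mul_of_nonneg_right hb hC
  have hsplit : (μ + (Δ + δ)) * b k
      = b k * (2 * R k + (Δ + δ)) + 2 * ∑ m ∈ Finset.univ.erase k, b m * R m := by
    rw [← Finset.add_sum_erase _ _ (Finset.mem_univ k)] at h
    linear_combination h
  have hdiag : |b k * (2 * R k + (Δ + δ))| ≤ |b k| * (Δ - δ) := by
    rw [abs_mul]
    exact mul_le_mul_of_nonneg_left (abs_le.mpr ⟨by linarith, by linarith⟩) (abs_nonneg _)
  refine le_of_mul_le_mul_right ?_ (abs_pos.mpr hbk)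
  calc |μ + (Δ + δ)| * |b k| = |(μ + (Δ + δ)) * b k| := (abs_mul _ _).symm
    _ ≤ |b k| * (Δ - δ) + 2 * (|b k| * C) := by
        rw [hsplit]
        refine (abs_add_le _ _).trans ?_
        rw [abs_mul (2 : ℝ), abs_two]
        linarith
    _ = (Δ - δ + 2 * C) * |b k| := by ring

theorem Fin.sum_erase_abs_le_of_sum_eq_zero {b : Fin 3 → ℝ} (hb : ∑ i, b i = 0) {k : Fin 3}
    (hk : ∀ m, |b m| ≤ |b k|) : ∑ m ∈ Finset.univ.erase k, |b m| ≤ |b k| := by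
  rw [Finset.sum_erase_eq_sub (Finset.mem_univ k), Fin.sum_univ_three]
  rw [Fin.sum_univ_three] at hb
  have h₀ := hk 0
  have h₁ := hk 1
  have h₂ := hk 2
  rcases abs_cases (b 0) with ⟨e₀, s₀⟩ | ⟨e₀, s₀⟩ <;>
    rcases abs_cases (b 1) with ⟨e₁, s₁⟩ | ⟨e₁, s₁⟩ <;>
    rcases abs_cases (b 2) with ⟨e₂, s₂⟩ | ⟨e₂, s₂⟩ <;> linarith

theorem Sum.injective_vecCons_inl_inr {ι : Type*} {k m : ι} (hm : m ≠ k) :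
    Function.Injective ![Sum.inl k, Sum.inr k, Sum.inl m, (Sum.inr m : ι ⊕ ι)] := by
  intro i j
  fin_cases i <;> fin_cases j <;> simp [hm, hm.symm]

theorem Rhat_eigenvalue_estimate_traceless_canonical_form_general
    (n : ℕ)
    (A : Fin n → Fin n → Fin n → Fin n → ℝ) (δ Δ : ℝ)
    (hA1 : ∀ i j p q, A i j p q = - A j i p q)
    (hA2 : ∀ i j p q, A i j p q = - A i j q p)
    (hA3 : ∀ i j p q, A i j p q = A p q i j)
    (hBianchi : ∀ i j p q, A i j p q + A p i j q + A j p i q = 0)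
    (hsec : ∀ X Y : EuclideanSpace ℝ (Fin n),
      ‖X‖ ^ 2 * ‖Y‖ ^ 2 - ⟪X, Y⟫_ℝ ^ 2 = 1 →
      δ ≤ (∑ i, ∑ j, ∑ p, ∑ q, A i j p q * X i * Y j * Y p * X q) ∧
      (∑ i, ∑ j, ∑ p, ∑ q, A i j p q * X i * Y j * Y p * X q) ≤ Δ)
    (e : Fin 6 → EuclideanSpace ℝ (Fin n))
    (he : ∀ i j : Fin 6, ⟪e i, e j⟫_ℝ = if i = j then 1 else 0)
    (b : Fin 3 → ℝ)
    (hb_ne : ∃ i, b i ≠ 0)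
    (hb_sum : ∑ i, b i = 0)
    (β : Fin n → Fin n → ℝ)
    (hβ : ∀ k l, β k l = ∑ i : Fin 3,
      b i * (e (Fin.castAdd 3 i) k * e (Fin.addNat i 3) l
           - e (Fin.castAdd 3 i) l * e (Fin.addNat i 3) k))
    (μ : ℝ)
    (heig : ∀ i j, ∑ p, ∑ q, A i j p q * β p q = μ * β i j) :
    |μ + (Δ + δ)| ≤ (7 / 3) * (Δ - δ) := by
  have hA : IsAlgebraicCurvatureTensor A := ⟨hA1, hA2, hA3, hBianchi⟩
  set x : Fin 3 → EuclideanSpace ℝ (Fin n) := fun i => e (Fin.castAdd 3 i)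
  set y : Fin 3 → EuclideanSpace ℝ (Fin n) := fun i => e (Fin.addNat i 3)
  have hxy : Orthonormal ℝ (Sum.elim x y) := by
    have := (orthonormal_iff_ite.mpr he).comp (Sum.elim (Fin.castAdd 3) (Fin.addNat · 3))
      (by decide)
    rwa [Sum.comp_elim] at this
  obtain rfl : β = twoForm b x y := funext₂ hβ
  obtain ⟨k, -, hk⟩ := Finset.exists_max_image Finset.univ (fun m => |b m|) Finset.univ_nonempty
  have hbk : b k ≠ 0 := by
    obtain ⟨i, hi⟩ := hb_ne
    exact abs_pos.mp ((abs_pos.mpr hi).trans_le (hk i (Finset.mem_univ i)))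
  have hsec' : SectionalCurvatureBetween A δ Δ := hsec
  obtain ⟨hδ, hΔ⟩ := hsec'.le_neg_curvatureForm_of_orthonormal hA (hxy.1 (.inl k))
    (hxy.1 (.inr k)) (hxy.inner_eq_zero Sum.inl_ne_inr)
  refine (abs_add_le_of_mul_eq_sum (by linarith) hbk
    (Fin.sum_erase_abs_le_of_sum_eq_zero hb_sum fun m => hk m (Finset.mem_univ m)) hδ hΔ
    (fun m hm => abs_curvatureForm_le_of_orthonormal hA hsec'
      (hxy.comp _ (Sum.injective_vecCons_inl_inr hm)))
    (mul_coeff_eq_of_eigen b x y hA hxy heig k)).trans_eq (by ring)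

theorem Rhat_eigenvalue_estimate_traceless_canonical_form
    (n : ℕ) (hn : 6 ≤ n)
    (A : Fin n → Fin n → Fin n → Fin n → ℝ) (δ Δ : ℝ)
    (hA1 : ∀ i j p q, A i j p q = - A j i p q)
    (hA2 : ∀ i j p q, A i j p q = - A i j q p)
    (hA3 : ∀ i j p q, A i j p q = A p q i j)
    (hBianchi : ∀ i j p q, A i j p q + A p i j q + A j p i q = 0)
    (hsec : ∀ X Y : EuclideanSpace ℝ (Fin n),
      ‖X‖ ^ 2 * ‖Y‖ ^ 2 - ⟪X, Y⟫_ℝ ^ 2 = 1 →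
      δ ≤ (∑ i, ∑ j, ∑ p, ∑ q, A i j p q * X i * Y j * Y p * X q) ∧
      (∑ i, ∑ j, ∑ p, ∑ q, A i j p q * X i * Y j * Y p * X q) ≤ Δ)
    (e : Fin 6 → EuclideanSpace ℝ (Fin n))
    (he : ∀ i j : Fin 6, ⟪e i, e j⟫_ℝ = if i = j then 1 else 0)
    (b : Fin 3 → ℝ)
    (hb_ne : ∃ i, b i ≠ 0)
    (hb_sum : ∑ i, b i = 0)
    (β : Fin n → Fin n → ℝ)
    (hβ : ∀ k l, β k l = ∑ i : Fin 3,
      b i * (e (Fin.castAdd 3 i) k * e (Fin.addNat i 3) l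
           - e (Fin.castAdd 3 i) l * e (Fin.addNat i 3) k))
    (μ : ℝ)
    (heig : ∀ i j, ∑ p, ∑ q, A i j p q * β p q = μ * β i j) :
    |μ + (Δ + δ)| ≤ (7 / 3) * (Δ - δ) :=
  Rhat_eigenvalue_estimate_traceless_canonical_form_general n A δ Δ hA1 hA2 hA3 hBianchi hsec e he b
    hb_ne hb_sum β hβ μ heig
end

section
/- Let A be an algebraic curvature tensor on ℝ⁶ with δ ≤ R̄ ≤ Δ. Let e₁, …, e₆ be an orthonormal basis of ℝ⁶ and a, b, c ∈ ℝ, not all zero, with a + b + c = 0, and let h be the symmetric array h_{ij} = a((e₁)_i(e₁)_j + (e₂)_i(e₂)_j) + b((e₃)_i(e₃)_j + (e₄)_i(e₄)_j) + c((e₅)_i(e₅)_j + (e₆)_i(e₆)_j). If r ∈ ℝ satisfies ∑_{k,l} A_{kilj} h_{kl} = r h_{ij} for all i, j, then 2δ − Δ ≤ r ≤ 2Δ − δ. -/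
open scoped BigOperators InnerProductSpace

/-!
Contract the eigenvalue equation `R̊ h = r h` with `e n ⊗ e n`. Since `h = ∑ₘ wₘ eₘ ⊗ eₘ` with
weights `w = (a, a, b, b, c, c)`, this gives `r wₙ = -∑_{m ≠ n} wₘ K(eₘ, eₙ)`, where every
sectional curvature `K(eₘ, eₙ)` lies in `[δ, Δ]` and `∑_{m ≠ n} wₘ = -wₙ`. Measuring `K` from the
midpoint `(δ + Δ)/2` yields `|wₙ| |r - (δ + Δ)/2| ≤ (Δ - δ)/2 · ∑_{m ≠ n} |wₘ|`. Choosing `n` with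
`|wₙ|` maximal, the trace-free condition forces `|a| + |b| + |c| = 2 |wₙ|`, so the right-hand sum is
`3 |wₙ|`, which is exactly the claimed pinching `|r - (δ + Δ)/2| ≤ 3 (Δ - δ)/2`.
-/

open Finset

section CurvatureTensor

variable {ι κ : Type*} [Fintype ι] [Fintype κ]

/-- With this convention the sectional curvature of the plane spanned by an orthonormal pair
`X, Y` is `curvForm A X Y Y X`. -/
def curvForm (A : ι → ι → ι → ι → ℝ) (X Y Z W : EuclideanSpace ℝ ι) : ℝ :=
  ∑ i, ∑ j, ∑ p, ∑ q, A i j p q * X i * Y j * Z p * W q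

def rcirc (A : ι → ι → ι → ι → ℝ) (h : ι → ι → ℝ) (i j : ι) : ℝ :=
  ∑ p, ∑ q, A p i q j * h p q

def quadForm (h : ι → ι → ℝ) (X : EuclideanSpace ℝ ι) : ℝ :=
  ∑ i, ∑ j, h i j * X i * X j

variable {A : ι → ι → ι → ι → ℝ}

theorem curvForm_self_left (hA1 : ∀ i j p q, A i j p q = -A j i p q)
    (X Z W : EuclideanSpace ℝ ι) : curvForm A X X Z W = 0 := by
  have h : curvForm A X X Z W = -curvForm A X X Z W := by
    unfold curvForm
    conv_lhs => rw [sum_comm]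
    simp only [← sum_neg_distrib]
    refine sum_congr rfl fun j _ => sum_congr rfl fun i _ => sum_congr rfl fun p _ =>
      sum_congr rfl fun q _ => ?_
    rw [hA1 i j p q]
    ring
  linarith

theorem curvForm_swap_right (hA2 : ∀ i j p q, A i j p q = -A i j q p)
    (X Y Z W : EuclideanSpace ℝ ι) : curvForm A X Y W Z = -curvForm A X Y Z W := by
  unfold curvForm
  simp only [← sum_neg_distrib]
  refine sum_congr rfl fun i _ => sum_congr rfl fun j _ => ?_
  rw [sum_comm]
  refine sum_congr rfl fun p _ => sum_congr rfl fun q _ => ?_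
  rw [hA2]
  ring

variable {h : ι → ι → ℝ} {w : κ → ℝ} {e : κ → EuclideanSpace ℝ ι}

theorem quadForm_rcirc_of_spectral (hh : ∀ i j, h i j = ∑ m, w m * e m i * e m j)
    (X : EuclideanSpace ℝ ι) :
    quadForm (rcirc A h) X = ∑ m, w m * curvForm A (e m) X (e m) X := by
  simp only [quadForm, rcirc, curvForm, hh, mul_sum, sum_mul]
  simp only [sum_comm (α := κ)]
  refine sum_congr rfl fun m _ => ?_
  rw [sum_comm_cycle]
  refine sum_congr rfl fun p _ => sum_congr rfl fun i _ => ?_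
  rw [sum_comm]
  refine sum_congr rfl fun q _ => sum_congr rfl fun j _ => ?_
  ring

theorem quadForm_of_spectral (hh : ∀ i j, h i j = ∑ m, w m * e m i * e m j)
    (X : EuclideanSpace ℝ ι) :
    quadForm h X = ∑ m, w m * ⟪e m, X⟫_ℝ ^ 2 := by
  simp only [quadForm, hh, PiLp.inner_apply, RCLike.inner_apply, conj_trivial, sq, mul_sum,
    sum_mul]
  simp only [sum_comm (α := κ)]
  refine sum_congr rfl fun m _ => sum_congr rfl fun i _ => sum_congr rfl fun j _ => ?_
  ring

theorem mul_eq_neg_sum_curvForm_of_rcirc_eq [DecidableEq κ]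
    (hA1 : ∀ i j p q, A i j p q = -A j i p q) (hA2 : ∀ i j p q, A i j p q = -A i j q p)
    (he : Orthonormal ℝ e) (hh : ∀ i j, h i j = ∑ m, w m * e m i * e m j) {r : ℝ}
    (heig : ∀ i j, rcirc A h i j = r * h i j) (n : κ) :
    r * w n = -∑ m ∈ univ.erase n, w m * curvForm A (e m) (e n) (e n) (e m) := by
  have hq : quadForm (rcirc A h) (e n) = r * quadForm h (e n) := by
    simp only [quadForm, heig, mul_sum, mul_assoc]
  rw [quadForm_rcirc_of_spectral hh, quadForm_of_spectral hh] at hq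
  simp only [orthonormal_iff_ite.mp he, curvForm_swap_right hA2 _ _ (e n)] at hq
  rw [sum_erase _ (by rw [curvForm_self_left hA1, mul_zero])]
  simpa using hq.symm

end CurvatureTensor

theorem sum_erase_eq_neg_of_sum_eq_zero {κ : Type*} [Fintype κ] [DecidableEq κ] {w : κ → ℝ}
    (hw : ∑ m, w m = 0) (n : κ) : ∑ m ∈ univ.erase n, w m = -w n := by
  linarith [add_sum_erase univ w (mem_univ n)]

theorem abs_mul_abs_sub_midpoint_le {κ : Type*} [Fintype κ] [DecidableEq κ] {w K : κ → ℝ}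
    {n : κ} {δ Δ r : ℝ} (hK : ∀ m ≠ n, δ ≤ K m ∧ K m ≤ Δ) (hw : ∑ m, w m = 0)
    (hr : r * w n = -∑ m ∈ univ.erase n, w m * K m) :
    |w n| * |r - (δ + Δ) / 2| ≤ (Δ - δ) / 2 * ∑ m ∈ univ.erase n, |w m| := by
  have key : w n * (r - (δ + Δ) / 2) = -∑ m ∈ univ.erase n, w m * (K m - (δ + Δ) / 2) := by
    simp only [mul_sub, sum_sub_distrib, ← sum_mul, sum_erase_eq_neg_of_sum_eq_zero hw]
    linarith
  calc |w n| * |r - (δ + Δ) / 2| = |∑ m ∈ univ.erase n, w m * (K m - (δ + Δ) / 2)| := by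
        rw [← abs_mul, key, abs_neg]
    _ ≤ ∑ m ∈ univ.erase n, |w m * (K m - (δ + Δ) / 2)| := abs_sum_le_sum_abs _ _
    _ ≤ ∑ m ∈ univ.erase n, |w m| * ((Δ - δ) / 2) := by
        refine sum_le_sum fun m hm => ?_
        obtain ⟨hδ, hΔ⟩ := hK m (ne_of_mem_erase hm)
        rw [abs_mul]
        gcongr
        exact abs_le.mpr ⟨by linarith, by linarith⟩
    _ = (Δ - δ) / 2 * ∑ m ∈ univ.erase n, |w m| := by rw [← sum_mul, mul_comm]

theorem abs_sub_midpoint_le_of_sum_abs_le {κ : Type*} [Fintype κ] [DecidableEq κ] {w K : κ → ℝ}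
    {n : κ} {δ Δ r k : ℝ} (hK : ∀ m ≠ n, δ ≤ K m ∧ K m ≤ Δ) (hw : ∑ m, w m = 0)
    (hr : r * w n = -∑ m ∈ univ.erase n, w m * K m) (hn : w n ≠ 0)
    (hspread : ∑ m ∈ univ.erase n, |w m| ≤ k * |w n|) :
    |r - (δ + Δ) / 2| ≤ k * ((Δ - δ) / 2) := by
  obtain ⟨m, hm⟩ : (univ.erase n).Nonempty := nonempty_of_sum_ne_zero (f := w) <| by
    rw [sum_erase_eq_neg_of_sum_eq_zero hw]
    exact neg_ne_zero.mpr hn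
  obtain ⟨hδ, hΔ⟩ := hK m (ne_of_mem_erase hm)
  refine le_of_mul_le_mul_left ?_ (abs_pos.mpr hn)
  calc |w n| * |r - (δ + Δ) / 2| ≤ (Δ - δ) / 2 * ∑ m ∈ univ.erase n, |w m| :=
        abs_mul_abs_sub_midpoint_le hK hw hr
    _ ≤ (Δ - δ) / 2 * (k * |w n|) := by gcongr; linarith
    _ = |w n| * (k * ((Δ - δ) / 2)) := by ring

theorem abs_add_abs_add_abs_le_two_mul {a b c M : ℝ} (h : a + b + c = 0) (ha : |a| ≤ M)
    (hb : |b| ≤ M) (hc : |c| ≤ M) : |a| + |b| + |c| ≤ 2 * M := by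
  rcases abs_cases a with ⟨ha', -⟩ | ⟨ha', -⟩ <;> rcases abs_cases b with ⟨hb', -⟩ | ⟨hb', -⟩ <;>
    rcases abs_cases c with ⟨hc', -⟩ | ⟨hc', -⟩ <;> linarith

theorem exists_ne_zero_sum_erase_abs_le_three_mul {a b c : ℝ} (hne : ¬(a = 0 ∧ b = 0 ∧ c = 0))
    (hsum : a + b + c = 0) :
    ∃ n, ![a, a, b, b, c, c] n ≠ 0 ∧
      ∑ m ∈ univ.erase n, |![a, a, b, b, c, c] m| ≤ 3 * |![a, a, b, b, c, c] n| := by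
  set w : Fin 6 → ℝ := ![a, a, b, b, c, c]
  obtain ⟨n, -, hmax⟩ := exists_max_image univ (fun m => |w m|) univ_nonempty
  have hle (m : Fin 6) : |w m| ≤ |w n| := hmax m (mem_univ m)
  refine ⟨n, fun h0 => hne ?_, ?_⟩
  · have hzero (m : Fin 6) : w m = 0 := abs_nonpos_iff.mp (by simpa [h0] using hle m)
    exact ⟨hzero 0, hzero 2, hzero 4⟩
  · have htotal : ∑ m, |w m| = 2 * (|a| + |b| + |c|) := by
      simp only [Fin.sum_univ_six, Matrix.cons_val_zero, Matrix.cons_val_one, Matrix.cons_val, w]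
      ring
    linarith [add_sum_erase univ (fun m => |w m|) (mem_univ n),
      abs_add_abs_add_abs_le_two_mul hsum (hle 0) (hle 2) (hle 4)]

theorem Rcirc_eigenvalue_estimate_S2plus0_canonical_form_general
    (A : Fin 6 → Fin 6 → Fin 6 → Fin 6 → ℝ) (δ Δ : ℝ)
    (hA1 : ∀ i j p q, A i j p q = - A j i p q)
    (hA2 : ∀ i j p q, A i j p q = - A i j q p)
    (hsec : ∀ X Y : EuclideanSpace ℝ (Fin 6),
      ‖X‖ ^ 2 * ‖Y‖ ^ 2 - ⟪X, Y⟫_ℝ ^ 2 = 1 →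
      δ ≤ (∑ i, ∑ j, ∑ p, ∑ q, A i j p q * X i * Y j * Y p * X q) ∧
      (∑ i, ∑ j, ∑ p, ∑ q, A i j p q * X i * Y j * Y p * X q) ≤ Δ)
    (e : Fin 6 → EuclideanSpace ℝ (Fin 6))
    (he : ∀ i j : Fin 6, ⟪e i, e j⟫_ℝ = if i = j then 1 else 0)
    (a b c : ℝ)
    (habc_ne : ¬(a = 0 ∧ b = 0 ∧ c = 0))
    (habc_sum : a + b + c = 0)
    (h : Fin 6 → Fin 6 → ℝ)
    (hh : ∀ i j, h i j =
        a * (e 0 i * e 0 j + e 1 i * e 1 j)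
      + b * (e 2 i * e 2 j + e 3 i * e 3 j)
      + c * (e 4 i * e 4 j + e 5 i * e 5 j))
    (r : ℝ)
    (heig : ∀ i j, ∑ p, ∑ q, A p i q j * h p q = r * h i j) :
    2 * δ - Δ ≤ r ∧ r ≤ 2 * Δ - δ := by
  have hON : Orthonormal ℝ e := orthonormal_iff_ite.mpr he
  set w : Fin 6 → ℝ := ![a, a, b, b, c, c]
  have hspectral (i j : Fin 6) : h i j = ∑ m, w m * e m i * e m j := by
    simp only [hh, Fin.sum_univ_six, Matrix.cons_val_zero, Matrix.cons_val_one, Matrix.cons_val, w]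
    ring
  have hw : ∑ m, w m = 0 := by
    simp only [Fin.sum_univ_six, Matrix.cons_val_zero, Matrix.cons_val_one, Matrix.cons_val, w]
    linarith
  have hK (n m : Fin 6) (hmn : m ≠ n) :
      δ ≤ curvForm A (e m) (e n) (e n) (e m) ∧ curvForm A (e m) (e n) (e n) (e m) ≤ Δ :=
    hsec _ _ (by simp [hON.1, hON.2 hmn])
  obtain ⟨n, hn, hspread⟩ := exists_ne_zero_sum_erase_abs_le_three_mul habc_ne habc_sum
  have hr := abs_sub_midpoint_le_of_sum_abs_le (hK n) hw
    (mul_eq_neg_sum_curvForm_of_rcirc_eq hA1 hA2 hON hspectral heig n) hn hspread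
  rw [abs_le] at hr
  constructor <;> linarith [hr.1, hr.2]

theorem Rcirc_eigenvalue_estimate_S2plus0_canonical_form
    (A : Fin 6 → Fin 6 → Fin 6 → Fin 6 → ℝ) (δ Δ : ℝ)
    (hA1 : ∀ i j p q, A i j p q = - A j i p q)
    (hA2 : ∀ i j p q, A i j p q = - A i j q p)
    (hA3 : ∀ i j p q, A i j p q = A p q i j)
    (hBianchi : ∀ i j p q, A i j p q + A p i j q + A j p i q = 0)
    (hsec : ∀ X Y : EuclideanSpace ℝ (Fin 6),
      ‖X‖ ^ 2 * ‖Y‖ ^ 2 - ⟪X, Y⟫_ℝ ^ 2 = 1 →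
      δ ≤ (∑ i, ∑ j, ∑ p, ∑ q, A i j p q * X i * Y j * Y p * X q) ∧
      (∑ i, ∑ j, ∑ p, ∑ q, A i j p q * X i * Y j * Y p * X q) ≤ Δ)
    (e : Fin 6 → EuclideanSpace ℝ (Fin 6))
    (he : ∀ i j : Fin 6, ⟪e i, e j⟫_ℝ = if i = j then 1 else 0)
    (a b c : ℝ)
    (habc_ne : ¬(a = 0 ∧ b = 0 ∧ c = 0))
    (habc_sum : a + b + c = 0)
    (h : Fin 6 → Fin 6 → ℝ)
    (hh : ∀ i j, h i j =
        a * (e 0 i * e 0 j + e 1 i * e 1 j)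
      + b * (e 2 i * e 2 j + e 3 i * e 3 j)
      + c * (e 4 i * e 4 j + e 5 i * e 5 j))
    (r : ℝ)
    (heig : ∀ i j, ∑ p, ∑ q, A p i q j * h p q = r * h i j) :
    2 * δ - Δ ≤ r ∧ r ≤ 2 * Δ - δ :=
  Rcirc_eigenvalue_estimate_S2plus0_canonical_form_general A δ Δ hA1 hA2 hsec e he a b c habc_ne
    habc_sum h hh r heig
end

section
/- On ℝ⁶, let (ω, ψ⁺, ψ⁻) satisfy the SU(3) contraction identities, and let W = (W_{ijkl}) be an algebraic curvature tensor that is Ricci-traceless (∑_k W_{kijk} = 0 for all i, j) and lies in Ω²₈ in each index pair: ∑_{k,l} W_{ijkl}ω_{kl} = 0, ∑_{k,l} W_{ijkl}ψ⁺_{klm} = 0, and (1/2)∑_{u,v} W_{ijuv}(⋆ω)_{uvkl} = −W_{ijkl} for all indices, where (⋆ω)_{ijkl} = ω_{ij}ω_{kl} + ω_{jk}ω_{il} + ω_{lj}ω_{ik}. Let h = (h_{ij}) be symmetric and anticommuting with ω (∑_p h_{ip}ω_{pj} = −∑_p ω_{ip}h_{pj} for all i, j), let β = h ⋄ ψ⁺,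 and define γ_{abc} = ∑_{p,u} (W_{abpu}β_{puc} + W_{acpu}β_{pbu} + W_{bcpu}β_{apu}) (the Weyl-curvature term of the Weitzenböck formula on 3-forms). Then ∑_{b,c} γ_{abc}ψ⁺_{tbc} = 8 (W̊h)_{at} for all a, t, where (W̊h)_{ij} = ∑_{k,l} W_{kilj}h_{kl}. -/
/-!
The Ω²₈ conditions `W·ω = 0`, `½ W·⋆ω = -W` say that every slice `W i j · ·`, read as a matrix `M`,
satisfies `ωᵀ M ω = M`, hence commutes with `ω`. Of the three terms of `∑ γ_{abc} ψ⁺_{tbc}`, the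
last vanishes because `W` kills `ψ⁺` in its first pair, and the second equals the first because `β`
and `ψ⁺` are both skew in their last two slots. Expanding `β = h ⋄ ψ⁺` in the first term, the
summand with `h` on the free slot dies for the same reason and the other two coincide, which leaves
twice one `ψ⁺ψ⁺`-contraction. Its four terms are computed from Ricci-tracelessness, the commutation
of `W` and the anticommutation of `h` with `ω`, and the orthogonality of `ω`: they add up to
`-2 ∑ W_{abpt} h_{pb}`, which the Bianchi identity turns into `2 (W̊h)_{at}`.
-/

open scoped BigOperators

/-- Kronecker delta on `Fin 6`. -/
noncomputable def kd6 (i j : Fin 6) : ℝ := if i = j then 1 else 0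

open Finset
open scoped Matrix

section Tensors

variable {ι : Type*} [Fintype ι] {ω M : ι → ι → ℝ} {W : ι → ι → ι → ι → ℝ} {h : ι → ι → ℝ}
  {ψ β : ι → ι → ι → ℝ}

noncomputable def diamond (h : ι → ι → ℝ) (ψ : ι → ι → ι → ℝ) (i j k : ι) : ℝ :=
  ∑ p, (h i p * ψ p j k + h j p * ψ i p k + h k p * ψ i j p)

theorem sum_sum_mul_eq_zero_of_antisymm_of_symm {A S : ι → ι → ℝ}
    (hA : ∀ i j, A i j = -A j i) (hS : ∀ i j, S i j = S j i) :
    ∑ i, ∑ j, A i j * S i j = 0 := by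
  have hneg : ∑ i, ∑ j, A i j * S i j = -∑ j, ∑ i, A i j * S i j := by
    simp only [← sum_neg_distrib]
    refine sum_congr rfl fun i _ => sum_congr rfl fun j _ => ?_
    rw [hA i j, hS i j]
    ring
  have hcomm : ∑ j, ∑ i, A i j * S i j = ∑ i, ∑ j, A i j * S i j := sum_comm
  linarith

theorem sum_two_four_eq_zero_of_ricci (hW2 : ∀ i j p q, W i j p q = -W i j q p)
    (hW3 : ∀ i j p q, W i j p q = W p q i j) (hRic : ∀ i j, ∑ k, W k i j k = 0) (a p : ι) :
    ∑ b, W a b p b = 0 := by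
  have hflip : ∀ b, W a b p b = -W b a p b := fun b => by
    rw [hW3 a b p b, hW2 p b a b, hW3 p b b a]
  simp only [hflip, sum_neg_distrib, hRic, neg_zero]

theorem sum_sum_mul_symm_eq_neg_of_bianchi (hW1 : ∀ i j p q, W i j p q = -W j i p q)
    (hW2 : ∀ i j p q, W i j p q = -W i j q p) (hW3 : ∀ i j p q, W i j p q = W p q i j)
    (hBianchi : ∀ i j p q, W i j p q + W p i j q + W j p i q = 0)
    (hsymm : ∀ i j, h i j = h j i) (a t : ι) :
    ∑ b, ∑ p, W a b p t * h p b = -∑ k, ∑ l, W k a l t * h k l := by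
  have hsplit : ∀ b p, W a b p t = W t a b p - W p a b t := fun b p => by
    have := hBianchi a b t p
    rw [hW3 b t a p, hW1 a p b t] at this
    linarith [hW2 a b p t]
  have hzero : ∑ b, ∑ p, W t a b p * h p b = 0 :=
    sum_sum_mul_eq_zero_of_antisymm_of_symm (hW2 t a) (fun b p => hsymm p b)
  simp only [hsplit, sub_mul, sum_sub_distrib, hzero, zero_sub]
  rw [sum_comm]

theorem sum_sum_mul_mul_eq_self_of_star (hω : ∀ i j, ω i j = -ω j i)
    (hM : ∀ i j, M i j = -M j i) (hMω : ∑ k, ∑ l, M k l * ω k l = 0)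
    (hstar : ∀ k l, (1 / 2 : ℝ) * (∑ u, ∑ v, M u v *
      (ω u v * ω k l + ω v k * ω u l + ω l v * ω u k)) = -M k l)
    (k l : ι) : ∑ u, ∑ v, M u v * ω u k * ω v l = M k l := by
  have h1 : ∑ u, ∑ v, M u v * (ω u v * ω k l) = 0 := by
    simp only [← mul_assoc, ← sum_mul, hMω, zero_mul]
  have h2 : ∑ u, ∑ v, M u v * (ω v k * ω u l) = -∑ u, ∑ v, M u v * ω u k * ω v l := by
    rw [sum_comm]
    simp only [← sum_neg_distrib]
    refine sum_congr rfl fun v _ => sum_congr rfl fun u _ => ?_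
    rw [hM u v]
    ring
  have h3 : ∑ u, ∑ v, M u v * (ω l v * ω u k) = -∑ u, ∑ v, M u v * ω u k * ω v l := by
    simp only [← sum_neg_distrib]
    refine sum_congr rfl fun u _ => sum_congr rfl fun v _ => ?_
    rw [hω l v]
    ring
  have := hstar k l
  simp only [mul_add, sum_add_distrib, h1, h2, h3] at this
  linarith

theorem sum_mul_comm_of_conj_eq_self [DecidableEq ι]
    (hω_unit : ∀ i j, ∑ k, ω i k * ω j k = if i = j then 1 else 0)
    (hconj : ∀ k l, ∑ u, ∑ v, M u v * ω u k * ω v l = M k l) (p t : ι) :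
    ∑ u, M p u * ω u t = ∑ u, ω p u * M u t := by
  set J := Matrix.of ω
  have hJ : J * Jᵀ = 1 := by
    ext i j
    simpa [J, Matrix.mul_apply, Matrix.one_apply] using hω_unit i j
  have hM : Jᵀ * Matrix.of M * J = Matrix.of M := by
    ext k l
    simp only [J, Matrix.mul_apply, Matrix.transpose_apply, Matrix.of_apply, sum_mul]
    rw [← hconj k l, sum_comm]
    exact sum_congr rfl fun u _ => sum_congr rfl fun v _ => by ring
  have hcomm : Matrix.of M * J = J * Matrix.of M := by
    rw [← hM, ← Matrix.mul_assoc, ← Matrix.mul_assoc, hJ, Matrix.one_mul, hM]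
  simpa [J, Matrix.mul_apply] using congrFun (congrFun hcomm p) t

theorem sum_mul_sum_mul_eq_of_orthogonal [DecidableEq ι]
    (hω_col : ∀ x y, ∑ p, ω p x * ω p y = if x = y then 1 else 0) (v w : ι → ℝ) :
    ∑ p, (∑ x, ω p x * v x) * (∑ y, ω p y * w y) = ∑ x, v x * w x := by
  simp only [sum_mul_sum]
  rw [sum_comm]
  refine sum_congr rfl fun x _ => ?_
  rw [sum_comm]
  have hfactor : ∀ y, ∑ p, ω p x * v x * (ω p y * w y) = (∑ p, ω p x * ω p y) * (v x * w y) :=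
    fun y => by rw [sum_mul]; exact sum_congr rfl fun p _ => by ring
  simp [hfactor, hω_col]

theorem sum_sum_mul_ω_eq_zero
    (hcomm : ∀ a b p t, ∑ u, W a b p u * ω u t = ∑ u, ω p u * W a b u t)
    (htr : ∀ a p, ∑ b, W a b p b = 0) (a p : ι) :
    ∑ b, ∑ u, W a b p u * ω u b = 0 := by
  simp only [hcomm]
  rw [sum_comm]
  simp only [← mul_sum, htr, mul_zero, sum_const_zero]

theorem sum_mul_mul_ω_mul_ω_eq_zero
    (hcomm : ∀ a b p t, ∑ u, W a b p u * ω u t = ∑ u, ω p u * W a b u t)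
    (htr : ∀ a p, ∑ b, W a b p b = 0) (a t : ι) :
    ∑ b, ∑ p, ∑ u, ∑ q, W a b p u * h p q * (ω q t * ω u b) = 0 := by
  have hfactor : ∀ b p, ∑ u, ∑ q, W a b p u * h p q * (ω q t * ω u b) =
      (∑ u, W a b p u * ω u b) * ∑ q, h p q * ω q t := fun b p => by
    rw [sum_mul_sum]
    exact sum_congr rfl fun _ _ => sum_congr rfl fun _ _ => by ring
  simp only [hfactor]
  rw [sum_comm]
  simp only [← sum_mul, sum_sum_mul_ω_eq_zero hcomm htr, zero_mul, sum_const_zero]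

theorem sum_mul_mul_ω_mul_ω_eq_neg [DecidableEq ι]
    (hω_col : ∀ x y, ∑ p, ω p x * ω p y = if x = y then 1 else 0)
    (hcomm : ∀ a b p t, ∑ u, W a b p u * ω u t = ∑ u, ω p u * W a b u t)
    (hanticomm : ∀ i j, ∑ p, h i p * ω p j = -∑ p, ω i p * h p j) (a t : ι) :
    ∑ b, ∑ p, ∑ u, ∑ q, W a b p u * h p q * (ω q b * ω u t) =
      -∑ b, ∑ p, W a b p t * h p b := by
  have hfactor : ∀ b p, ∑ u, ∑ q, W a b p u * h p q * (ω q b * ω u t) =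
      -((∑ x, ω p x * W a b x t) * ∑ y, ω p y * h y b) := fun b p => by
    rw [← hcomm, ← mul_neg, ← hanticomm, sum_mul_sum]
    exact sum_congr rfl fun _ _ => sum_congr rfl fun _ _ => by ring
  simp only [hfactor, sum_neg_distrib, sum_mul_sum_mul_eq_of_orthogonal hω_col]

theorem sum_mul_mul_sum_ψ_mul_ψ [DecidableEq ι]
    (hω_col : ∀ x y, ∑ p, ω p x * ω p y = if x = y then 1 else 0)
    (hψψ : ∀ i j a b, ∑ k, ψ i j k * ψ a b k =
      (if i = a then 1 else 0) * (if j = b then 1 else 0) -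
        (if i = b then 1 else 0) * (if j = a then 1 else 0) - ω i a * ω j b + ω i b * ω j a)
    (hcomm : ∀ a b p t, ∑ u, W a b p u * ω u t = ∑ u, ω p u * W a b u t)
    (htr : ∀ a p, ∑ b, W a b p b = 0)
    (hanticomm : ∀ i j, ∑ p, h i p * ω p j = -∑ p, ω i p * h p j) (a t : ι) :
    ∑ b, ∑ p, ∑ u, ∑ q, W a b p u * h p q * ∑ c, ψ q u c * ψ t b c =
      -2 * ∑ b, ∑ p, W a b p t * h p b := by
  have htrace : ∑ b, ∑ p, ∑ u, ∑ q, W a b p u * h p q *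
      ((if q = t then 1 else 0) * (if u = b then 1 else 0)) = 0 := by
    simp only [mul_ite, mul_one, mul_zero, sum_ite_irrel, sum_ite_eq', mem_univ, ↓reduceIte,
      sum_const_zero]
    rw [sum_comm]
    simp only [← sum_mul, htr, zero_mul, sum_const_zero]
  have hcontract : ∑ b, ∑ p, ∑ u, ∑ q, W a b p u * h p q *
      ((if q = b then 1 else 0) * (if u = t then 1 else 0)) = ∑ b, ∑ p, W a b p t * h p b := by
    simp only [mul_ite, mul_one, mul_zero, sum_ite_irrel, sum_ite_eq', mem_univ, ↓reduceIte,
      sum_const_zero]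
  simp only [hψψ, mul_sub, mul_add, sum_sub_distrib, sum_add_distrib, htrace, hcontract,
    sum_mul_mul_ω_mul_ω_eq_zero hcomm htr, sum_mul_mul_ω_mul_ω_eq_neg hω_col hcomm hanticomm]
  ring

theorem diamond_antisymm_right (hψ2 : ∀ i j k, ψ i j k = -ψ i k j) (i j k : ι) :
    diamond h ψ i j k = -diamond h ψ i k j := by
  rw [diamond, diamond, ← sum_neg_distrib]
  refine sum_congr rfl fun p _ => ?_
  rw [hψ2 p j k, hψ2 i p k, hψ2 i j p]
  ring

theorem sum_sum_mul_diamond_of_antisymm (hψ1 : ∀ i j k, ψ i j k = -ψ j i k)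
    (hM : ∀ p u, M p u = -M u p) (hMψ : ∀ m, ∑ p, ∑ u, M p u * ψ p u m = 0) (c : ι) :
    ∑ p, ∑ u, M p u * diamond h ψ p u c = 2 * ∑ p, ∑ u, ∑ q, M p u * (h p q * ψ q u c) := by
  have hswap : ∑ p, ∑ u, ∑ q, M p u * (h u q * ψ p q c) =
      ∑ p, ∑ u, ∑ q, M p u * (h p q * ψ q u c) := by
    refine sum_comm.trans (sum_congr rfl fun x _ => sum_congr rfl fun y _ =>
      sum_congr rfl fun q _ => ?_)
    rw [hM y x, hψ1 y q c]
    ring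
  have hvanish : ∑ p, ∑ u, ∑ q, M p u * (h c q * ψ p u q) = 0 := by
    calc _ = ∑ q, ∑ p, ∑ u, M p u * (h c q * ψ p u q) := sum_comm_cycle
      _ = ∑ q, h c q * ∑ p, ∑ u, M p u * ψ p u q := by
        simp only [mul_sum]
        exact sum_congr rfl fun _ _ => sum_congr rfl fun _ _ => sum_congr rfl fun _ _ => by ring
      _ = 0 := by simp only [hMψ, mul_zero, sum_const_zero]
  rw [two_mul]
  simp only [diamond, mul_sum, mul_add, sum_add_distrib, hswap, hvanish, add_zero]

theorem sum_mul_mul_ψ_eq_zero_of_first_pair (X : ι → ι → ℝ)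
    (hψ1 : ∀ i j k, ψ i j k = -ψ j i k) (hψ2 : ∀ i j k, ψ i j k = -ψ i k j)
    (hW3 : ∀ i j p q, W i j p q = W p q i j)
    (hWψ : ∀ i j m, ∑ k, ∑ l, W i j k l * ψ k l m = 0) (t : ι) :
    ∑ b, ∑ c, ∑ p, ∑ u, W b c p u * X p u * ψ t b c = 0 := by
  have hpair : ∀ p u, ∑ b, ∑ c, W b c p u * ψ t b c = 0 := fun p u => by
    rw [← hWψ p u t]
    exact sum_congr rfl fun b _ => sum_congr rfl fun c _ => by
      rw [hW3, hψ1 t b c, hψ2 b t c, neg_neg]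
  calc _ = ∑ b, ∑ p, ∑ u, ∑ c, W b c p u * X p u * ψ t b c :=
        sum_congr rfl fun _ _ => sum_comm_cycle.symm
    _ = ∑ p, ∑ u, ∑ b, ∑ c, W b c p u * X p u * ψ t b c := sum_comm_cycle.symm
    _ = ∑ p, ∑ u, X p u * ∑ b, ∑ c, W b c p u * ψ t b c := by
        simp only [mul_sum]
        exact sum_congr rfl fun _ _ => sum_congr rfl fun _ _ => sum_congr rfl fun _ _ =>
          sum_congr rfl fun _ _ => by ring
    _ = 0 := by simp only [hpair, mul_zero, sum_const_zero]

theorem sum_mul_mul_ψ_swap (hψ2 : ∀ i j k, ψ i j k = -ψ i k j)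
    (hβ : ∀ i j k, β i j k = -β i k j) (a t : ι) :
    ∑ b, ∑ c, ∑ p, ∑ u, W a c p u * β p b u * ψ t b c =
      ∑ b, ∑ c, ∑ p, ∑ u, W a b p u * β p u c * ψ t b c := by
  refine sum_comm.trans (sum_congr rfl fun c _ => sum_congr rfl fun b _ =>
    sum_congr rfl fun p _ => sum_congr rfl fun u _ => ?_)
  rw [hβ p b u, hψ2 t b c]
  ring

theorem sum_mul_diamond_mul_ψ (hψ1 : ∀ i j k, ψ i j k = -ψ j i k)
    (hW2 : ∀ i j p q, W i j p q = -W i j q p)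
    (hWψ : ∀ i j m, ∑ k, ∑ l, W i j k l * ψ k l m = 0) (a t : ι) :
    ∑ b, ∑ c, ∑ p, ∑ u, W a b p u * diamond h ψ p u c * ψ t b c =
      2 * ∑ b, ∑ p, ∑ u, ∑ q, W a b p u * h p q * ∑ c, ψ q u c * ψ t b c := by
  have hpair : ∀ b c, ∑ p, ∑ u, W a b p u * diamond h ψ p u c =
      2 * ∑ p, ∑ u, ∑ q, W a b p u * (h p q * ψ q u c) := fun b =>
    sum_sum_mul_diamond_of_antisymm hψ1 (hW2 a b) (hWψ a b)
  calc _ = ∑ b, ∑ c, (∑ p, ∑ u, W a b p u * diamond h ψ p u c) * ψ t b c := by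
        simp only [sum_mul]
    _ = 2 * ∑ b, ∑ c, ∑ p, ∑ u, ∑ q, W a b p u * h p q * (ψ q u c * ψ t b c) := by
        simp only [hpair, mul_sum, sum_mul]
        exact sum_congr rfl fun _ _ => sum_congr rfl fun _ _ => sum_congr rfl fun _ _ =>
          sum_congr rfl fun _ _ => sum_congr rfl fun _ _ => by ring
    _ = _ := by
        congr 1
        simp only [mul_sum]
        refine sum_congr rfl fun b _ => ?_
        rw [← sum_comm_cycle]
        exact sum_congr rfl fun p _ => sum_congr rfl fun u _ => sum_comm

end Tensors

theorem NK6_weyl_term_of_weitzenbock_on_3forms_general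
    (ω : Fin 6 → Fin 6 → ℝ)
    (ψp : Fin 6 → Fin 6 → Fin 6 → ℝ)
    (W : Fin 6 → Fin 6 → Fin 6 → Fin 6 → ℝ)
    (h : Fin 6 → Fin 6 → ℝ)
    (β γ : Fin 6 → Fin 6 → Fin 6 → ℝ)
    (hω_skew : ∀ i j, ω i j = - ω j i)
    (hω_unit : ∀ i j, ∑ k, ω i k * ω j k = kd6 i j)
    (hψp1 : ∀ i j k, ψp i j k = - ψp j i k)
    (hψp2 : ∀ i j k, ψp i j k = - ψp i k j)
    (hψpψp : ∀ i j a b, ∑ k, ψp i j k * ψp a b k =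
      kd6 i a * kd6 j b - kd6 i b * kd6 j a - ω i a * ω j b + ω i b * ω j a)
    (hW1 : ∀ i j p q, W i j p q = - W j i p q)
    (hW2 : ∀ i j p q, W i j p q = - W i j q p)
    (hW3 : ∀ i j p q, W i j p q = W p q i j)
    (hBianchi : ∀ i j p q, W i j p q + W p i j q + W j p i q = 0)
    (hRic : ∀ i j, ∑ k, W k i j k = 0)
    (hWω : ∀ i j, ∑ k, ∑ l, W i j k l * ω k l = 0)
    (hWψp : ∀ i j m, ∑ k, ∑ l, W i j k l * ψp k l m = 0)
    (hW8 : ∀ i j k l, (1 / 2 : ℝ) * (∑ u, ∑ v, W i j u v *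
        (ω u v * ω k l + ω v k * ω u l + ω l v * ω u k)) = - W i j k l)
    (hsymm : ∀ i j, h i j = h j i)
    (hanticomm : ∀ i j, ∑ p, h i p * ω p j = - ∑ p, ω i p * h p j)
    (hβ : ∀ i j k, β i j k =
      ∑ p, (h i p * ψp p j k + h j p * ψp i p k + h k p * ψp i j p))
    (hγ : ∀ a b c, γ a b c = ∑ p, ∑ u,
      (W a b p u * β p u c + W a c p u * β p b u + W b c p u * β a p u)) :
    ∀ a t, ∑ b, ∑ c, γ a b c * ψp t b c = 8 * ∑ k, ∑ l, W k a l t * h k l := by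
  intro a t
  obtain rfl : β = diamond h ψp := funext fun i => funext fun j => funext (hβ i j)
  have hω_col : ∀ x y, ∑ p, ω p x * ω p y = kd6 x y := fun x y => by
    rw [← hω_unit]
    exact sum_congr rfl fun p _ => by rw [hω_skew p x, hω_skew p y]; ring
  have hcomm : ∀ a b p t, ∑ u, W a b p u * ω u t = ∑ u, ω p u * W a b u t := fun a b =>
    sum_mul_comm_of_conj_eq_self hω_unit
      (sum_sum_mul_mul_eq_self_of_star hω_skew (hW2 a b) (hWω a b) (hW8 a b))
  have htr := sum_two_four_eq_zero_of_ricci hW2 hW3 hRic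
  have hfirst : ∑ b, ∑ c, ∑ p, ∑ u, W a b p u * diamond h ψp p u c * ψp t b c =
      4 * ∑ k, ∑ l, W k a l t * h k l := by
    rw [sum_mul_diamond_mul_ψ hψp1 hW2 hWψp,
      sum_mul_mul_sum_ψ_mul_ψ hω_col hψpψp hcomm htr hanticomm,
      sum_sum_mul_symm_eq_neg_of_bianchi hW1 hW2 hW3 hBianchi hsymm]
    ring
  simp only [hγ, sum_mul, add_mul, sum_add_distrib]
  rw [sum_mul_mul_ψ_swap hψp2 (diamond_antisymm_right hψp2),
    sum_mul_mul_ψ_eq_zero_of_first_pair _ hψp1 hψp2 hW3 hWψp, hfirst]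
  ring

theorem NK6_weyl_term_of_weitzenbock_on_3forms
    (ω : Fin 6 → Fin 6 → ℝ)
    (ψp ψm : Fin 6 → Fin 6 → Fin 6 → ℝ)
    (W : Fin 6 → Fin 6 → Fin 6 → Fin 6 → ℝ)
    (h : Fin 6 → Fin 6 → ℝ)
    (β γ : Fin 6 → Fin 6 → Fin 6 → ℝ)
    (hω_skew : ∀ i j, ω i j = - ω j i)
    (hω_unit : ∀ i j, ∑ k, ω i k * ω j k = kd6 i j)
    (hψp1 : ∀ i j k, ψp i j k = - ψp j i k)
    (hψp2 : ∀ i j k, ψp i j k = - ψp i k j)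
    (hψm1 : ∀ i j k, ψm i j k = - ψm j i k)
    (hψm2 : ∀ i j k, ψm i j k = - ψm i k j)
    (hψpω : ∀ i j a, ∑ k, ψp i j k * ω a k = - ψm i j a)
    (hψpψp : ∀ i j a b, ∑ k, ψp i j k * ψp a b k =
      kd6 i a * kd6 j b - kd6 i b * kd6 j a - ω i a * ω j b + ω i b * ω j a)
    (hW1 : ∀ i j p q, W i j p q = - W j i p q)
    (hW2 : ∀ i j p q, W i j p q = - W i j q p)
    (hW3 : ∀ i j p q, W i j p q = W p q i j)
    (hBianchi : ∀ i j p q, W i j p q + W p i j q + W j p i q = 0)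
    (hRic : ∀ i j, ∑ k, W k i j k = 0)
    (hWω : ∀ i j, ∑ k, ∑ l, W i j k l * ω k l = 0)
    (hWψp : ∀ i j m, ∑ k, ∑ l, W i j k l * ψp k l m = 0)
    (hW8 : ∀ i j k l, (1 / 2 : ℝ) * (∑ u, ∑ v, W i j u v *
        (ω u v * ω k l + ω v k * ω u l + ω l v * ω u k)) = - W i j k l)
    (hsymm : ∀ i j, h i j = h j i)
    (hanticomm : ∀ i j, ∑ p, h i p * ω p j = - ∑ p, ω i p * h p j)
    (hβ : ∀ i j k, β i j k =
      ∑ p, (h i p * ψp p j k + h j p * ψp i p k + h k p * ψp i j p))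
    (hγ : ∀ a b c, γ a b c = ∑ p, ∑ u,
      (W a b p u * β p u c + W a c p u * β p b u + W b c p u * β a p u)) :
    ∀ a t, ∑ b, ∑ c, γ a b c * ψp t b c = 8 * ∑ k, ∑ l, W k a l t * h k l :=
  NK6_weyl_term_of_weitzenbock_on_3forms_general ω ψp W h β γ hω_skew hω_unit hψp1 hψp2 hψpψp hW1
    hW2 hW3 hBianchi hRic hWω hWψp hW8 hsymm hanticomm hβ hγ
end
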